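/- Let n ≥ 2 and a ≥ 0 be natural numbers, let e₀ = Pi.single 0 1 : Fin n → ℝ, and let Z be the ℝ-submodule of MvPolynomial (Fin n) ℝ consisting of those harmonic polynomials p homogeneous of degree a such that for every A ∈ Matrix.orthogonalGroup (Fin n) ℝ with A.mulVec e₀ = e₀ and every x : Fin n → ℝ, one has MvPolynomial.eval (A.mulVec x) p = MvPolynomial.eval x p. Then Module.finrank ℝ Z = 1. -/

import Mathlib

open MvPolynomial

/-- The space of zonal harmonics: harmonic polynomials, homogeneous of degree `a`, invariant
under the orthogonal transformations fixing the vector `e`. -/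
noncomputable def zonalHarmonics (n a : ℕ) (e : Fin n → ℝ) :
    Submodule ℝ (MvPolynomial (Fin n) ℝ) where
  carrier := {p | p ∈ homogeneousSubmodule (Fin n) ℝ a ∧
    (∑ i, pderiv i (pderiv i p)) = 0 ∧
    ∀ A ∈ Matrix.orthogonalGroup (Fin n) ℝ, A.mulVec e = e →
      ∀ x : Fin n → ℝ, MvPolynomial.eval (A.mulVec x) p = MvPolynomial.eval x p}
  zero_mem' := by
    refine ⟨Submodule.zero_mem _, by simp, ?_⟩
    intro A hA hAe x
    simp
  add_mem' := by
    rintro p q ⟨hp1, hp2, hp3⟩ ⟨hq1, hq2, hq3⟩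
    refine ⟨Submodule.add_mem _ hp1 hq1, ?_, ?_⟩
    · simp only [map_add, Finset.sum_add_distrib, hp2, hq2, add_zero]
    · intro A hA hAe x
      simp only [map_add, hp3 A hA hAe x, hq3 A hA hAe x]
  smul_mem' := by
    rintro c p ⟨hp1, hp2, hp3⟩
    refine ⟨Submodule.smul_mem _ c hp1, ?_, ?_⟩
    · have h : ∀ i : Fin n, pderiv i (pderiv i (c • p)) = c • pderiv i (pderiv i p) := by
        intro i
        rw [Derivation.map_smul, Derivation.map_smul]
      rw [Finset.sum_congr rfl (fun i _ => h i), ← Finset.smul_sum, hp2, smul_zero]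
    · intro A hA hAe x
      simp only [MvPolynomial.smul_eval, hp3 A hA hAe x]

/-! Let `q` be homogeneous of degree `a`, harmonic, and invariant under the orthogonal maps
fixing `e₀`, and write `S = x₁² + ⋯ + xₙ₋₁²`. Two points with the same `x₀` and the same norm are
exchanged by a Householder reflection fixing `e₀`, so `q(x) = G(x₀, √S(x))` where
`G(t, u) = q(t e₀ + u e₁)` is a binary form of degree `a`, even in `u`. Hence
`q = ∑ₖ dₖ x₀^(a-2k) S^k`. Since
`Δ(x₀^M S^k) = M(M-1) x₀^(M-2) S^k + 2k(2k+n-3) x₀^M S^(k-1)`, harmonicity of `q` is the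
recurrence `dₖ (a-2k)(a-2k-1) + dₖ₊₁ 2(k+1)(2k+n-1) = 0`, whose second coefficient never
vanishes for `n ≥ 2`: the space is spanned by the solution with `d₀ = 1`. -/

open Finset Matrix

namespace Matrix

variable {σ : Type*} [Fintype σ] [DecidableEq σ]

theorem mulVec_dotProduct_mulVec_of_mem_orthogonalGroup {A : Matrix σ σ ℝ}
    (hA : A ∈ orthogonalGroup σ ℝ) (x y : σ → ℝ) : (A *ᵥ x) ⬝ᵥ (A *ᵥ y) = x ⬝ᵥ y := by
  rw [dotProduct_mulVec, ← mulVec_transpose, mulVec_mulVec,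
    (mem_orthogonalGroup_iff' σ ℝ).1 hA, one_mulVec]

/-- The witness is the reflection in the hyperplane orthogonal to `v - w`. -/
theorem exists_mem_orthogonalGroup_mulVec_eq {e v w : σ → ℝ} (hvw : v ⬝ᵥ v = w ⬝ᵥ w)
    (he : e ⬝ᵥ v = e ⬝ᵥ w) : ∃ A ∈ orthogonalGroup σ ℝ, A *ᵥ e = e ∧ A *ᵥ v = w := by
  let b := EuclideanSpace.basisFun σ ℝ
  let f := Submodule.reflection (ℝ ∙ (WithLp.toLp 2 v - WithLp.toLp 2 w))ᗮ
  have hf (x : σ → ℝ) : f.toMatrix b.toBasis b.toBasis *ᵥ x = (f (WithLp.toLp 2 x)).ofLp :=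
    LinearMap.toMatrix_mulVec_repr b.toBasis b.toBasis f.toLinearEquiv.toLinearMap _
  refine ⟨_, f.toMatrix_mem_unitaryGroup b b, ?_, ?_⟩
  · rw [hf, Submodule.reflection_mem_subspace_eq_self]
    rw [Submodule.mem_orthogonal_singleton_iff_inner_right, inner_sub_left,
      EuclideanSpace.inner_toLp_toLp, EuclideanSpace.inner_toLp_toLp]
    simp [he]
  · rw [hf, Submodule.reflection_sub, WithLp.ofLp_toLp]
    rw [← sq_eq_sq₀ (norm_nonneg _) (norm_nonneg _), ← real_inner_self_eq_norm_sq,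
      ← real_inner_self_eq_norm_sq, EuclideanSpace.inner_toLp_toLp,
      EuclideanSpace.inner_toLp_toLp]
    simpa using hvw

end Matrix

namespace MvPolynomial

section Laplacian

variable {σ R : Type*} [Fintype σ] [CommRing R]

noncomputable def laplacian : MvPolynomial σ R →ₗ[R] MvPolynomial σ R :=
  ∑ i, (pderiv i).toLinearMap ∘ₗ (pderiv i).toLinearMap

theorem laplacian_apply (p : MvPolynomial σ R) : laplacian p = ∑ i, pderiv i (pderiv i p) := by
  simp [laplacian]

theorem laplacian_C_mul (c : R) (p : MvPolynomial σ R) :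
    laplacian (C c * p) = C c * laplacian p := by
  rw [← smul_eq_C_mul, ← smul_eq_C_mul, map_smul]

theorem laplacian_mul (p q : MvPolynomial σ R) :
    laplacian (p * q) =
      laplacian p * q + 2 * ∑ i, pderiv i p * pderiv i q + p * laplacian q := by
  simp only [laplacian_apply, pderiv_mul, map_add, Finset.sum_mul, Finset.mul_sum,
    ← Finset.sum_add_distrib]
  exact Finset.sum_congr rfl fun i _ => by ring

theorem laplacian_pow (p : MvPolynomial σ R) (k : ℕ) :
    laplacian (p ^ k) = k * p ^ (k - 1) * laplacian p +
      (k * (k - 1) : ℕ) * p ^ (k - 2) * ∑ i, pderiv i p ^ 2 := by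
  simp only [laplacian_apply, pderiv_pow, pderiv_mul, Derivation.map_natCast, Finset.mul_sum,
    ← Finset.sum_add_distrib, Nat.sub_sub]
  refine Finset.sum_congr rfl fun i _ => ?_
  push_cast
  ring

theorem laplacian_X_pow (i : σ) (M : ℕ) :
    laplacian (X i ^ M : MvPolynomial σ R) =
      ((M * (M - 1) : ℕ) : MvPolynomial σ R) * X i ^ (M - 2) := by
  classical
  rw [laplacian_pow, laplacian_apply]
  simp [pderiv_X, Pi.single_apply, apply_ite]

section SumSqErase

variable [DecidableEq σ] (i₀ : σ)

noncomputable def sumSqErase : MvPolynomial σ R := ∑ i ∈ univ.erase i₀, X i ^ 2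

theorem eval_sumSqErase (x : σ → R) : eval x (sumSqErase i₀) = x ⬝ᵥ x - x i₀ ^ 2 := by
  simp [sumSqErase, dotProduct, sq, Finset.sum_erase_eq_sub]

theorem eval_sumSqErase_single_add_single {i₁ : σ} (hi₁ : i₁ ≠ i₀) (t u : R) :
    eval (Pi.single i₀ t + Pi.single i₁ u) (sumSqErase i₀) = u ^ 2 := by
  rw [eval_sumSqErase]
  simp [dotProduct_add, hi₁, hi₁.symm]
  ring

theorem isHomogeneous_sumSqErase : (sumSqErase i₀ : MvPolynomial σ R).IsHomogeneous 2 :=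
  IsHomogeneous.sum _ _ _ fun i _ => by simpa using (isHomogeneous_X R i).pow 2

theorem pderiv_sumSqErase (j : σ) :
    pderiv j (sumSqErase i₀ : MvPolynomial σ R) = if j = i₀ then 0 else 2 * X j := by
  simp only [sumSqErase, map_sum, pderiv_pow, pderiv_X, Pi.single_apply, mul_ite, mul_one,
    mul_zero, Finset.sum_ite_eq', mem_erase, mem_univ, and_true, ite_not]
  norm_num

theorem laplacian_sumSqErase :
    laplacian (sumSqErase i₀ : MvPolynomial σ R) = (2 * (Fintype.card σ - 1) : ℕ) := by
  have h2 (j : σ) : pderiv j (2 * X j : MvPolynomial σ R) = 2 := by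
    rw [← map_ofNat C 2, pderiv_C_mul, pderiv_X_self, mul_one]
  simp only [laplacian_apply, pderiv_sumSqErase, apply_ite (pderiv _), map_zero, h2,
    Finset.sum_ite, Finset.sum_const_zero, zero_add, Finset.sum_const, Finset.filter_ne',
    Finset.card_erase_of_mem (mem_univ _), Finset.card_univ, nsmul_eq_mul]
  push_cast
  ring

theorem sum_pderiv_sumSqErase_sq :
    ∑ j, pderiv j (sumSqErase i₀ : MvPolynomial σ R) ^ 2 = 4 * sumSqErase i₀ := by
  simp only [pderiv_sumSqErase, ite_pow, zero_pow two_ne_zero, Finset.sum_ite,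
    Finset.sum_const_zero, zero_add, Finset.filter_ne']
  rw [sumSqErase, Finset.mul_sum]
  exact Finset.sum_congr rfl fun j _ => by ring

theorem laplacian_sumSqErase_pow_succ (k : ℕ) :
    laplacian (sumSqErase i₀ ^ (k + 1) : MvPolynomial σ R) =
      ((2 * (k + 1) * (2 * k + Fintype.card σ - 1) : ℕ) : MvPolynomial σ R) *
        sumSqErase i₀ ^ k := by
  obtain ⟨N, hN⟩ : ∃ N, Fintype.card σ = N + 1 :=
    ⟨_, (Nat.succ_pred_eq_of_pos (Fintype.card_pos_iff.2 ⟨i₀⟩)).symm⟩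
  rw [laplacian_pow, laplacian_sumSqErase, sum_pderiv_sumSqErase_sq, hN]
  rcases k with _ | k
  · simp
  · simp only [← add_assoc, Nat.add_sub_cancel]
    push_cast
    ring

theorem laplacian_X_pow_mul_sumSqErase_pow (M k : ℕ) :
    laplacian (X i₀ ^ M * sumSqErase i₀ ^ k : MvPolynomial σ R) =
      ((M * (M - 1) : ℕ) : MvPolynomial σ R) * X i₀ ^ (M - 2) * sumSqErase i₀ ^ k +
        X i₀ ^ M * laplacian (sumSqErase i₀ ^ k) := by
  have hcross :
      ∑ i, pderiv i (X i₀ ^ M : MvPolynomial σ R) * pderiv i (sumSqErase i₀ ^ k) = 0 := by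
    refine Finset.sum_eq_zero fun i _ => ?_
    by_cases hi : i = i₀
    · simp [hi, pderiv_sumSqErase]
    · simp [pderiv_X_of_ne (Ne.symm hi)]
  rw [laplacian_mul, laplacian_X_pow, hcross, mul_zero, add_zero]

noncomputable def zonalPoly (a : ℕ) (d : ℕ → R) : MvPolynomial σ R :=
  ∑ k ∈ range (a / 2 + 1), C (d k) * X i₀ ^ (a - 2 * k) * sumSqErase i₀ ^ k

theorem isHomogeneous_zonalPoly (a : ℕ) (d : ℕ → R) : (zonalPoly i₀ a d).IsHomogeneous a := by
  refine IsHomogeneous.sum _ _ _ fun k hk => ?_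
  have := (((isHomogeneous_X R i₀).pow (a - 2 * k)).C_mul (d k)).mul
    ((isHomogeneous_sumSqErase i₀).pow k)
  rwa [show 1 * (a - 2 * k) + 2 * k = a by have := mem_range.1 hk; omega] at this

theorem laplacian_zonalPoly (a : ℕ) (d : ℕ → R) :
    laplacian (zonalPoly i₀ a d) = ∑ k ∈ range (a / 2),
      C (d k * ((a - 2 * k) * (a - 2 * k - 1) : ℕ) +
        d (k + 1) * (2 * (k + 1) * (2 * k + Fintype.card σ - 1) : ℕ)) *
      X i₀ ^ (a - 2 * k - 2) * sumSqErase i₀ ^ k := by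
  simp only [zonalPoly, map_sum, mul_assoc, laplacian_C_mul, laplacian_X_pow_mul_sumSqErase_pow,
    mul_add, Finset.sum_add_distrib]
  rw [Finset.sum_range_succ, Finset.sum_range_succ' _ (a / 2)]
  have hlast : (a - 2 * (a / 2)) * (a - 2 * (a / 2) - 1) = 0 := by
    rw [show a - 2 * (a / 2) - 1 = 0 by omega, mul_zero]
  have hzero : laplacian (sumSqErase i₀ ^ 0 : MvPolynomial σ R) = 0 := by simp [laplacian_apply]
  simp only [hlast, hzero, Nat.cast_zero, zero_mul, mul_zero, add_zero,
    laplacian_sumSqErase_pow_succ, ← Finset.sum_add_distrib]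
  refine Finset.sum_congr rfl fun k _ => ?_
  rw [show a - 2 * (k + 1) = a - 2 * k - 2 by omega, map_add, map_mul, map_mul, map_natCast,
    map_natCast]
  push_cast
  ring

theorem eq_zero_of_sum_C_mul_X_pow_mul_sumSqErase_pow_eq_zero [Nontrivial σ] {M : ℕ}
    {e : ℕ → R} (f : ℕ → ℕ) (h : ∑ k ∈ range M, C (e k) * X i₀ ^ f k * sumSqErase i₀ ^ k = 0)
    {k : ℕ} (hk : k < M) : e k = 0 := by
  obtain ⟨i₁, hi₁⟩ := exists_ne i₀
  set g : σ → Polynomial R := Pi.single i₀ 1 + Pi.single i₁ Polynomial.X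
  have hg₀ : g i₀ = 1 := by simp [g, hi₁.symm]
  have hgS : aeval g (sumSqErase i₀ : MvPolynomial σ R) = Polynomial.X ^ 2 := by
    rw [sumSqErase, map_sum, Finset.sum_eq_single i₁]
    · simp [g, hi₁]
    · intro i hi hne
      simp [g, hne, (mem_erase.1 hi).1]
    · simp [hi₁]
  have := congrArg (fun p => (aeval g p).coeff (2 * k)) h
  simp only [map_sum, map_mul, aeval_C, map_pow, aeval_X, hg₀, hgS, one_pow, mul_one,
    ← pow_mul] at this
  simpa [Polynomial.finsetSum_coeff, Polynomial.coeff_C_mul_X_pow, hk] using this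

theorem laplacian_zonalPoly_eq_zero_iff [Nontrivial σ] (a : ℕ) (d : ℕ → R) :
    laplacian (zonalPoly i₀ a d) = 0 ↔ ∀ k < a / 2,
      d k * ((a - 2 * k) * (a - 2 * k - 1) : ℕ) +
        d (k + 1) * (2 * (k + 1) * (2 * k + Fintype.card σ - 1) : ℕ) = 0 := by
  rw [laplacian_zonalPoly]
  refine ⟨fun h k hk => eq_zero_of_sum_C_mul_X_pow_mul_sumSqErase_pow_eq_zero i₀ _ h hk,
    fun h => Finset.sum_eq_zero fun k hk => ?_⟩
  rw [h k (mem_range.1 hk), map_zero, zero_mul, zero_mul]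

end SumSqErase

end Laplacian

section ZonalCoeff

variable {K : Type*} [Field K] [CharZero K]

noncomputable def zonalCoeff (N a : ℕ) : ℕ → K
  | 0 => 1
  | k + 1 => -(((a - 2 * k) * (a - 2 * k - 1) : ℕ) / (2 * (k + 1) * (2 * k + N - 1) : ℕ) : K) *
      zonalCoeff N a k

theorem zonalCoeff_recurrence {N : ℕ} (hN : 2 ≤ N) (a k : ℕ) :
    zonalCoeff N a k * ((a - 2 * k) * (a - 2 * k - 1) : ℕ) +
      zonalCoeff N a (k + 1) * (2 * (k + 1) * (2 * k + N - 1) : ℕ) = (0 : K) := by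
  have hβ : ((2 * (k + 1) * (2 * k + N - 1) : ℕ) : K) ≠ 0 :=
    Nat.cast_ne_zero.2 (Nat.mul_ne_zero (by omega) (by omega))
  rw [zonalCoeff]
  field_simp
  ring

theorem eq_mul_zonalCoeff_of_recurrence {N a : ℕ} (hN : 2 ≤ N) {d : ℕ → K}
    (h : ∀ k < a / 2, d k * ((a - 2 * k) * (a - 2 * k - 1) : ℕ) +
      d (k + 1) * (2 * (k + 1) * (2 * k + N - 1) : ℕ) = 0) :
    ∀ k ≤ a / 2, d k = d 0 * zonalCoeff N a k := by
  intro k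
  induction k with
  | zero => simp [zonalCoeff]
  | succ k ih =>
    intro hk
    have hβ : ((2 * (k + 1) * (2 * k + N - 1) : ℕ) : K) ≠ 0 :=
      Nat.cast_ne_zero.2 (Nat.mul_ne_zero (by omega) (by omega))
    refine mul_right_cancel₀ hβ ?_
    linear_combination h k (by omega) - d 0 * zonalCoeff_recurrence (K := K) hN a k -
      ((a - 2 * k) * (a - 2 * k - 1) : ℕ) * ih (by omega)

end ZonalCoeff

section ZonalHarmonic

variable {σ K : Type*} [Fintype σ] [DecidableEq σ] [Field K] [CharZero K] (i₀ : σ) (a : ℕ)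

noncomputable def zonalHarmonic : MvPolynomial σ K :=
  zonalPoly i₀ a (zonalCoeff (Fintype.card σ) a)

variable [Nontrivial σ]

theorem laplacian_zonalHarmonic : laplacian (zonalHarmonic i₀ a : MvPolynomial σ K) = 0 :=
  (laplacian_zonalPoly_eq_zero_iff i₀ a _).2 fun k _ =>
    zonalCoeff_recurrence Fintype.one_lt_card a k

theorem zonalHarmonic_ne_zero : (zonalHarmonic i₀ a : MvPolynomial σ K) ≠ 0 := by
  intro h
  simpa [zonalCoeff] using
    eq_zero_of_sum_C_mul_X_pow_mul_sumSqErase_pow_eq_zero i₀ (fun k => a - 2 * k) h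
      (Nat.succ_pos (a / 2))

theorem zonalPoly_eq_smul_zonalHarmonic {d : ℕ → K} (h : laplacian (zonalPoly i₀ a d) = 0) :
    zonalPoly i₀ a d = d 0 • zonalHarmonic i₀ a := by
  have hd := eq_mul_zonalCoeff_of_recurrence Fintype.one_lt_card
    ((laplacian_zonalPoly_eq_zero_iff i₀ a d).1 h)
  rw [zonalHarmonic, zonalPoly, zonalPoly, Finset.smul_sum]
  refine Finset.sum_congr rfl fun k hk => ?_
  rw [hd k (Nat.lt_succ_iff.1 (mem_range.1 hk)), smul_eq_C_mul, C_mul]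
  ring

end ZonalHarmonic

theorem eval_aeval {σ τ R : Type*} [CommSemiring R] (y : τ → R) (g : σ → MvPolynomial τ R)
    (p : MvPolynomial σ R) : eval y (aeval g p) = eval (fun i => eval y (g i)) p :=
  eval₂Hom_bind₁ _ _ _ _

theorem coeff_aeval_C_mul_X {σ R : Type*} [CommSemiring R] (w : σ → R) (p : MvPolynomial σ R)
    (m : σ →₀ ℕ) :
    coeff m (aeval (fun i => C (w i) * X i) p) = (m.prod fun i k => w i ^ k) * coeff m p := by
  classical
  induction p using MvPolynomial.induction_on' with
  | monomial n r =>
    rw [aeval_monomial, algebraMap_eq]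
    simp only [mul_pow, Finsupp.prod_mul, ← C_pow, ← map_finsuppProd C, ← monomial_eq,
      coeff_C_mul, coeff_monomial]
    split_ifs with h
    · rw [h, mul_comm]
    · rw [mul_zero, mul_zero]
  | add p q hp hq => rw [map_add, coeff_add, hp, hq, coeff_add, mul_add]

theorem coeff_eq_zero_of_eval_update_neg {σ K : Type*} [DecidableEq σ] [Field K] [CharZero K]
    {p : MvPolynomial σ K} (i : σ) (h : ∀ y, eval (Function.update y i (-y i)) p = eval y p)
    {m : σ →₀ ℕ} (hm : Odd (m i)) : coeff m p = 0 := by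
  set w : σ → K := Function.update 1 i (-1)
  have hflip : aeval (fun j => C (w j) * X j) p = p := MvPolynomial.funext fun y => by
    have hw : (fun j => eval y (C (w j) * X j)) = Function.update y i (-y i) :=
      _root_.funext fun j => by by_cases hj : j = i <;> simp [w, hj]
    rw [eval_aeval, hw, h]
  have hsign : (m.prod fun j k => w j ^ k) = -1 := by
    rw [Finsupp.prod, Finset.prod_eq_single i (fun j _ hj => by simp [w, hj])
      (fun hi => absurd (Finsupp.notMem_support_iff.1 hi) (fun h0 => by simp [h0] at hm))]
    simp [w, hm.neg_one_pow]
  have := coeff_aeval_C_mul_X w p m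
  rwa [hflip, hsign, neg_one_mul, self_eq_neg] at this

theorem eval_eq_sum_of_isHomogeneous_of_coeff_odd_eq_zero {R : Type*} [CommSemiring R]
    {p : MvPolynomial (Fin 2) R} {a : ℕ} (hp : p.IsHomogeneous a)
    (hodd : ∀ m : Fin 2 →₀ ℕ, Odd (m 1) → coeff m p = 0) (y : Fin 2 → R) :
    eval y p = ∑ k ∈ range (a / 2 + 1),
      coeff (Finsupp.single 0 (a - 2 * k) + Finsupp.single 1 (2 * k)) p *
        y 0 ^ (a - 2 * k) * y 1 ^ (2 * k) := by
  set e : ℕ → Fin 2 →₀ ℕ := fun k => Finsupp.single 0 (a - 2 * k) + Finsupp.single 1 (2 * k)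
  have he₀ (k : ℕ) : e k 0 = a - 2 * k := by simp [e]
  have he₁ (k : ℕ) : e k 1 = 2 * k := by simp [e]
  have hsupp : p.support ⊆ (range (a / 2 + 1)).image e := by
    intro m hm
    have hdeg : m 0 + m 1 = a := by
      rw [← hp (mem_support_iff.1 hm)]
      simp [Finsupp.weight_apply, Finsupp.sum_fintype, Fin.sum_univ_two]
    obtain ⟨j, hj⟩ : Even (m 1) := by
      by_contra h
      exact mem_support_iff.1 hm (hodd m (Nat.not_even_iff_odd.1 h))
    refine mem_image.2 ⟨j, mem_range.2 (by omega), Finsupp.ext (Fin.forall_fin_two.2 ⟨?_, ?_⟩)⟩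
    · rw [he₀]; omega
    · rw [he₁]; omega
  rw [eval_eq', Finset.sum_subset hsupp fun m _ hm => by rw [notMem_support_iff.1 hm, zero_mul],
    Finset.sum_image fun k _ l _ hkl => by simpa [he₁] using congrArg (· 1) hkl]
  exact Finset.sum_congr rfl fun k _ => by rw [Fin.prod_univ_two, he₀, he₁, mul_assoc]

section Plane

variable {σ R : Type*} [CommSemiring R] [DecidableEq σ] (i₀ i₁ : σ)

theorem eval_aeval_single_add_single (p : MvPolynomial σ R) (y : Fin 2 → R) :
    eval y (aeval (Pi.single i₀ (X 0) + Pi.single i₁ (X 1)) p) =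
      eval (Pi.single i₀ (y 0) + Pi.single i₁ (y 1)) p := by
  rw [eval_aeval]
  congr 2 with i
  simp only [Pi.add_apply, map_add, Pi.single_apply]
  split_ifs <;> simp

theorem IsHomogeneous.aeval_single_add_single {p : MvPolynomial σ R} {a : ℕ}
    (hp : p.IsHomogeneous a) :
    (MvPolynomial.aeval (Pi.single i₀ (X 0) + Pi.single i₁ (X 1)) p :
      MvPolynomial (Fin 2) R).IsHomogeneous a := by
  refine (one_mul a) ▸ hp.aeval _ fun i => ?_
  simp only [Pi.add_apply, Pi.single_apply]
  refine IsHomogeneous.add ?_ ?_ <;> split_ifs <;>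
    first | exact isHomogeneous_X _ _ | exact isHomogeneous_zero _ _ _

end Plane

section Zonal

variable {σ : Type*} [Fintype σ] [DecidableEq σ]

def IsZonal (e : σ → ℝ) (q : MvPolynomial σ ℝ) : Prop :=
  ∀ A ∈ orthogonalGroup σ ℝ, A *ᵥ e = e → ∀ x, eval (A *ᵥ x) q = eval x q

theorem IsZonal.eval_eq_of_sumSqErase_eq {i₀ : σ} {q : MvPolynomial σ ℝ}
    (hq : IsZonal (Pi.single i₀ 1) q) {x y : σ → ℝ} (h₀ : x i₀ = y i₀)
    (hS : eval x (sumSqErase i₀) = eval y (sumSqErase i₀)) : eval x q = eval y q := by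
  rw [eval_sumSqErase, eval_sumSqErase, h₀, sub_left_inj] at hS
  obtain ⟨A, hA, hAe, hAx⟩ := exists_mem_orthogonalGroup_mulVec_eq hS
    (by rw [single_one_dotProduct, single_one_dotProduct, h₀])
  rw [← hAx, hq A hA hAe]

theorem isZonal_zonalPoly (i₀ : σ) (a : ℕ) (d : ℕ → ℝ) :
    IsZonal (Pi.single i₀ 1) (zonalPoly i₀ a d) := by
  intro A hA hAe x
  have h₀ : (A *ᵥ x) i₀ = x i₀ := by
    simpa [hAe, dotProduct_single_one] using
      mulVec_dotProduct_mulVec_of_mem_orthogonalGroup hA x (Pi.single i₀ 1)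
  have hS : eval (A *ᵥ x) (sumSqErase i₀) = eval x (sumSqErase i₀) := by
    rw [eval_sumSqErase, eval_sumSqErase, h₀, mulVec_dotProduct_mulVec_of_mem_orthogonalGroup hA]
  simp only [zonalPoly, map_sum, map_mul, map_pow, eval_C, eval_X, h₀, hS]

theorem IsZonal.exists_eq_zonalPoly [Nontrivial σ] {i₀ : σ} {a : ℕ} {q : MvPolynomial σ ℝ}
    (hq : IsZonal (Pi.single i₀ 1) q) (hhom : q.IsHomogeneous a) :
    ∃ d, q = zonalPoly i₀ a d := by
  obtain ⟨i₁, hi₁⟩ := exists_ne i₀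
  have hS (t u : ℝ) : eval (Pi.single i₀ t + Pi.single i₁ u) (sumSqErase i₀) = u ^ 2 :=
    eval_sumSqErase_single_add_single i₀ hi₁ t u
  set G := aeval (Pi.single i₀ (X 0) + Pi.single i₁ (X 1) : σ → MvPolynomial (Fin 2) ℝ) q
  have hodd (m : Fin 2 →₀ ℕ) : Odd (m 1) → coeff m G = 0 :=
    coeff_eq_zero_of_eval_update_neg 1 fun y => by
      simp only [G, eval_aeval_single_add_single, Function.update_self,
        Function.update_of_ne (zero_ne_one' (Fin 2))]
      exact hq.eval_eq_of_sumSqErase_eq (by simp [hi₁.symm]) (by rw [hS, hS, neg_sq])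
  refine ⟨fun k => coeff (Finsupp.single 0 (a - 2 * k) + Finsupp.single 1 (2 * k)) G,
    MvPolynomial.funext fun x => ?_⟩
  have hS₀ : 0 ≤ eval x (sumSqErase i₀) := by
    simp only [sumSqErase, map_sum, map_pow, eval_X]
    positivity
  set r := √(eval x (sumSqErase i₀))
  have hG : eval ![x i₀, r] G = eval (Pi.single i₀ (x i₀) + Pi.single i₁ r) q :=
    eval_aeval_single_add_single i₀ i₁ q _
  rw [hq.eval_eq_of_sumSqErase_eq (y := Pi.single i₀ (x i₀) + Pi.single i₁ r)
      (by simp [hi₁.symm]) (by rw [hS, Real.sq_sqrt hS₀]),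
    ← hG, eval_eq_sum_of_isHomogeneous_of_coeff_odd_eq_zero
      (p := G) (hhom.aeval_single_add_single i₀ i₁) hodd]
  simp only [zonalPoly, map_sum, map_mul, map_pow, eval_C, eval_X, Matrix.cons_val_zero,
    Matrix.cons_val_one, pow_mul, r, Real.sq_sqrt hS₀]

end Zonal

end MvPolynomial

theorem zonalHarmonics_eq_span {n : ℕ} [Nontrivial (Fin n)] (a : ℕ) (i₀ : Fin n) :
    zonalHarmonics n a (Pi.single i₀ 1) = Submodule.span ℝ {zonalHarmonic i₀ a} := by
  refine le_antisymm ?_ ?_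
  · rintro q ⟨hhom, hharm, hzonal⟩
    obtain ⟨d, rfl⟩ := IsZonal.exists_eq_zonalPoly hzonal ((mem_homogeneousSubmodule a _).1 hhom)
    rw [zonalPoly_eq_smul_zonalHarmonic i₀ a ((laplacian_apply _).trans hharm)]
    exact Submodule.smul_mem _ _ (Submodule.mem_span_singleton_self _)
  · rw [Submodule.span_le, Set.singleton_subset_iff]
    exact ⟨(mem_homogeneousSubmodule a _).2 (isHomogeneous_zonalPoly i₀ a _),
      (laplacian_apply _).symm.trans (laplacian_zonalHarmonic i₀ a), isZonal_zonalPoly i₀ a _⟩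

/-- The space of zonal harmonics of degree `a` (harmonic homogeneous polynomials invariant
under the subgroup of the orthogonal group fixing the first basis vector) is one-dimensional. -/
theorem finrank_zonalHarmonics (n a : ℕ) (hn : 2 ≤ n) :
    Module.finrank ℝ (zonalHarmonics n a (Pi.single (⟨0, by omega⟩ : Fin n) 1)) = 1 := by
  have : Nontrivial (Fin n) := Fin.nontrivial_iff_two_le.2 hn
  rw [zonalHarmonics_eq_span, finrank_span_singleton (zonalHarmonic_ne_zero _ a)]
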